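/- There exists a constant C > 0 such that for every odd g ∈ C^∞((−1,1)) with ∫_{−1}^{1}|g(x)|² dx < ∞, all s ≥ 0, and all y ∈ (−1,1), one has |u_{0,g}(s,y)| ≤ C e^{−s/2} (∫_{−1}^{1}|g(x)|² dx)^{1/2}. -/

import Mathlib

/-!
Since `g` is odd, its integral over the symmetric interval `[-b, b]` vanishes, so `u_{0,g}(s,y)` is
half the integral of `g` over an interval of length `2 e^{-s} |y|` inside `(-1, 1)`. Cauchy–Schwarz
on that interval bounds it by `√(e^{-s} |y| / 2) ‖g‖_{L²} ≤ e^{-s/2} ‖g‖_{L²}`.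
-/

open MeasureTheory Set ENNReal

/-- The solution `u_{0,g}` of the hyperboloidal free wave equation with data `(0,g)`. -/
noncomputable def u0g (g : ℝ → ℂ) (s y : ℝ) : ℂ :=
  (1/2) * ∫ x in (-1 + Real.exp (-s) * (1 + y))..(1 - Real.exp (-s) * (1 - y)), g x

section
variable {E : Type*} [NormedAddCommGroup E]

theorem integral_norm_le_sqrt_measureReal_mul_sqrt_integral_norm_sq {α : Type*}
    [MeasurableSpace α] {μ : Measure α} [IsFiniteMeasure μ] {g : α → E} (hg : MemLp g 2 μ) :
    ∫ x, ‖g x‖ ∂μ ≤ √(μ.real univ) * √(∫ x, ‖g x‖ ^ 2 ∂μ) := by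
  have hg' : MemLp (fun x ↦ ‖g x‖) (ENNReal.ofReal 2) μ := by simpa using hg.norm
  have hcs := integral_mul_norm_le_Lp_mul_Lq Real.HolderConjugate.two_two hg'
    (memLp_const (1 : ℝ))
  simp only [norm_norm, norm_one, mul_one, integral_const, smul_eq_mul, one_pow,
    Real.rpow_two] at hcs
  rw [Real.sqrt_eq_rpow, Real.sqrt_eq_rpow, mul_comm]
  exact hcs

variable [NormedSpace ℝ E]

theorem intervalIntegral.norm_integral_le_sqrt_mul_sqrt_setIntegral_norm_sq {g : ℝ → E}
    {S : Set ℝ} {a c : ℝ} (hg : MemLp g 2 (volume.restrict S)) (hS : uIoc a c ⊆ S) :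
    ‖∫ x in a..c, g x‖ ≤ √|c - a| * √(∫ x in S, ‖g x‖ ^ 2) := by
  have : IsFiniteMeasure (volume.restrict (uIoc a c)) := by
    rw [uIoc]; infer_instance
  have hvol : volume.real (uIoc a c) = |c - a| := by
    rw [uIoc, Real.volume_real_Ioc, max_sub_min_eq_abs, max_eq_left (abs_nonneg _)]
  calc ‖∫ x in a..c, g x‖ ≤ ∫ x in uIoc a c, ‖g x‖ :=
        intervalIntegral.norm_integral_le_integral_norm_uIoc
    _ ≤ √|c - a| * √(∫ x in uIoc a c, ‖g x‖ ^ 2) := by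
        rw [← hvol, ← measureReal_restrict_apply_univ]
        exact integral_norm_le_sqrt_measureReal_mul_sqrt_integral_norm_sq
          (hg.mono_measure (Measure.restrict_mono hS le_rfl))
    _ ≤ √|c - a| * √(∫ x in S, ‖g x‖ ^ 2) := by
        refine mul_le_mul_of_nonneg_left (Real.sqrt_le_sqrt ?_) (Real.sqrt_nonneg _)
        exact setIntegral_mono_set ((memLp_two_iff_integrable_sq_norm hg.1).mp hg)
          (.of_forall fun x ↦ by positivity) hS.eventuallyLE

theorem intervalIntegral.integral_neg_self_eq_zero_of_odd {g : ℝ → E} {b : ℝ}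
    (hodd : ∀ x ∈ uIcc (-b) b, g (-x) = -g x) :
    ∫ x in -b..b, g x = 0 := by
  have h : ∫ x in -b..b, g x = -∫ x in -b..b, g x := by
    rw [← intervalIntegral.integral_neg, ← intervalIntegral.integral_congr hodd,
      intervalIntegral.integral_comp_neg, neg_neg]
  have h2 : (2 : ℝ) • ∫ x in -b..b, g x = 0 := by
    rw [two_smul]; nth_rw 1 [h]; exact neg_add_cancel _
  exact (smul_eq_zero.mp h2).resolve_left two_ne_zero

end

theorem norm_u0g_le {g : ℝ → ℂ} (hcont : ContinuousOn g (Ioo (-1) 1))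
    (hodd : ∀ x ∈ Ioo (-1 : ℝ) 1, g (-x) = -g x) (hg : MemLp g 2 (volume.restrict (Ioo (-1) 1)))
    {s y : ℝ} (hs : 0 ≤ s) (hy : y ∈ Ioo (-1 : ℝ) 1) :
    ‖u0g g s y‖ ≤ √(Real.exp (-s) * |y| / 2) * √(∫ x in Ioo (-1 : ℝ) 1, ‖g x‖ ^ 2) := by
  obtain ⟨hy₁, hy₂⟩ := hy
  set E := Real.exp (-s)
  have hE₀ : 0 < E := Real.exp_pos _
  have hE₁ : E ≤ 1 := Real.exp_le_one_iff.mpr (by linarith)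
  set a := -1 + E * (1 + y)
  set b := 1 - E * (1 - y)
  have ha : a ∈ Ioo (-1 : ℝ) 1 := ⟨by nlinarith, by nlinarith⟩
  have hb : b ∈ Ioo (-1 : ℝ) 1 := ⟨by nlinarith, by nlinarith⟩
  have hb' : -b ∈ Ioo (-1 : ℝ) 1 := ⟨by linarith [hb.2], by linarith [hb.1]⟩
  have hab : uIcc a (-b) ⊆ Ioo (-1 : ℝ) 1 := ordConnected_Ioo.uIcc_subset ha hb'
  have hbb : uIcc (-b) b ⊆ Ioo (-1 : ℝ) 1 := ordConnected_Ioo.uIcc_subset hb' hb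
  have hreduce : ∫ x in a..b, g x = ∫ x in a..(-b), g x := by
    rw [← intervalIntegral.integral_add_adjacent_intervals (b := -b)
      (hcont.mono hab).intervalIntegrable (hcont.mono hbb).intervalIntegrable,
      intervalIntegral.integral_neg_self_eq_zero_of_odd fun x hx ↦ hodd x (hbb hx), add_zero]
  have hlen : |-b - a| = 2 * (E * |y|) := by
    rw [show -b - a = -2 * (E * y) by ring, abs_mul, abs_mul, abs_of_pos hE₀]; norm_num
  calc ‖u0g g s y‖ = ‖∫ x in a..(-b), g x‖ / 2 := by
        rw [u0g, ← hreduce, norm_mul]; norm_num; ring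
    _ ≤ √|-b - a| * √(∫ x in Ioo (-1 : ℝ) 1, ‖g x‖ ^ 2) / 2 := by
        gcongr
        exact intervalIntegral.norm_integral_le_sqrt_mul_sqrt_setIntegral_norm_sq hg
          (uIoc_subset_uIcc.trans hab)
    _ = √(E * |y| / 2) * √(∫ x in Ioo (-1 : ℝ) 1, ‖g x‖ ^ 2) := by
        rw [hlen, mul_div_right_comm, show E * |y| / 2 = 2 * (E * |y|) / 2 ^ 2 by ring,
          Real.sqrt_div' _ (by norm_num), Real.sqrt_sq zero_le_two]

/-- Pointwise decay of `u_{0,g}`: there is `C > 0` such that for every odd smooth `g` on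
`(-1,1)` with `∫|g|² < ∞`, all `s ≥ 0` and `y ∈ (-1,1)`,
`|u_{0,g}(s,y)| ≤ C e^{-s/2} (∫|g|²)^{1/2}`. -/
theorem stmt6 :
    ∃ C : ℝ, 0 < C ∧ ∀ g : ℝ → ℂ,
      ContDiffOn ℝ (⊤:ℕ∞) g (Ioo (-1:ℝ) 1) →
      (∀ x ∈ Ioo (-1:ℝ) 1, g (-x) = - g x) →
      IntegrableOn (fun x => ‖g x‖^2) (Ioo (-1:ℝ) 1) →
      ∀ s : ℝ, 0 ≤ s → ∀ y ∈ Ioo (-1:ℝ) 1,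
        ‖u0g g s y‖ ≤ C * Real.exp (-s/2) *
          Real.sqrt (∫ x in Ioo (-1:ℝ) 1, ‖g x‖^2) := by
  refine ⟨1, one_pos, fun g hsmooth hodd hint s hs y hy ↦ ?_⟩
  have hcont := hsmooth.continuousOn
  have hg : MemLp g 2 (volume.restrict (Ioo (-1) 1)) :=
    (memLp_two_iff_integrable_sq_norm (hcont.aestronglyMeasurable measurableSet_Ioo)).mpr hint
  have hy_abs : |y| ≤ 1 := abs_le.mpr ⟨hy.1.le, hy.2.le⟩
  calc ‖u0g g s y‖ ≤ √(Real.exp (-s) * |y| / 2) * √(∫ x in Ioo (-1 : ℝ) 1, ‖g x‖ ^ 2) :=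
        norm_u0g_le hcont hodd hg hs hy
    _ ≤ 1 * Real.exp (-s / 2) * √(∫ x in Ioo (-1 : ℝ) 1, ‖g x‖ ^ 2) := by
        rw [one_mul, Real.exp_half]
        gcongr
        nlinarith [Real.exp_pos (-s)]
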